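/- Suppose σ < 0 and fix T > 0. Then lim_{α→∞} ∫_{(0,∞)^p} (1 − e^{−α ψ(2Tw₁,…,2Tw_p)}) ρ(dw) = τ^σ/(−σ), which is finite and strictly positive. Consequently the expected number of nodes E[V_{α,T}] = α ∫ (1 − e^{−α ψ(2Tw)}) ρ(dw) satisfies E[V_{α,T}] = Θ(α) as α → ∞. -/

import Mathlib

/-!
For `σ < 0` the Lévy measure `ρ₀` is finite: it is `τ^σ/(-σ)` times the `Gamma(-σ, τ)`
distribution, because `Γ(1-σ) = -σ Γ(-σ)`. Multiplying by independent Gamma scores, which are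
probability measures, does not change the total mass, so `ρ` is finite of mass `τ^σ/(-σ)` and is
carried by `(0,∞)^p`. There `ψ(2Tw) > 0`, so `1 - exp(-α ψ(2Tw)) → 1` pointwise as `α → ∞`, and
dominated convergence by the constant `1` gives `∫ (1 - exp(-α ψ(2Tw))) ρ(dw) → ρ((0,∞)^p)`.
-/

open MeasureTheory Real Filter

/-- The Lévy measure of a generalized gamma process: the measure on `(0,∞)` with density
`w ↦ w^(-1-σ) * exp(-τ*w) / Γ(1-σ)` with respect to Lebesgue measure. -/
noncomputable def rho0 (σ τ : ℝ) : Measure ℝ :=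
  ((volume : Measure ℝ).restrict (Set.Ioi 0)).withDensity
    (fun w => ENNReal.ofReal (w ^ (-1 - σ) * Real.exp (-τ * w) / Real.Gamma (1 - σ)))

/-- The Gamma(a,b) probability measure on `(0,∞)`, with density
`x ↦ b^a x^(a−1) e^(−b x) / Γ(a)` with respect to Lebesgue measure. -/
noncomputable def gammaM (a b : ℝ) : Measure ℝ :=
  ((volume : Measure ℝ).restrict (Set.Ioi 0)).withDensity
    (fun x => ENNReal.ofReal (b ^ a * x ^ (a - 1) * Real.exp (-b * x) / Real.Gamma a))

/-- The multivariate Lévy measure `ρ` of the compound CRM with independent gamma scores: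
the pushforward of `ρ₀ ⊗ Gamma(a₁,b₁) ⊗ ⋯ ⊗ Gamma(a_p,b_p)` under
`(w₀, β₁, …, β_p) ↦ (w₀β₁, …, w₀β_p)`. -/
noncomputable def rhoC (σ τ : ℝ) (p : ℕ) (a b : Fin p → ℝ) : Measure (Fin p → ℝ) :=
  Measure.map (fun x : ℝ × (Fin p → ℝ) => fun k => x.1 * x.2 k)
    ((rho0 σ τ).prod (Measure.pi fun k => gammaM (a k) (b k)))

/-- The Laplace exponent `ψ(t) = ∫ (1 − e^{−Σ_k t_k v_k}) ρ(dv)` of the compound CRM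
(a finite quantity, expressed here as a Bochner integral). -/
noncomputable def psi (σ τ : ℝ) (p : ℕ) (a b : Fin p → ℝ) (t : Fin p → ℝ) : ℝ :=
  ∫ v, (1 - Real.exp (-∑ k, t k * v k)) ∂(rhoC σ τ p a b)

/-- `∫ (1 − e^{−α ψ(2Tw₁,…,2Tw_p)}) ρ(dw)`, so that `E[V_{α,T}]` equals `α` times this. -/
noncomputable def nodesIntegral (σ τ : ℝ) (p : ℕ) (a b : Fin p → ℝ) (α T : ℝ) : ℝ :=
  ∫ w, (1 - Real.exp (-α * psi σ τ p a b (fun k => 2 * T * w k))) ∂(rhoC σ τ p a b)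

open ProbabilityTheory
open scoped ENNReal Topology

lemma abs_one_sub_exp_neg_le_one {y : ℝ} (hy : 0 ≤ y) : |1 - exp (-y)| ≤ 1 := by
  rw [abs_le]
  constructor <;> linarith [exp_pos (-y), exp_le_one_iff.2 (neg_nonpos.2 hy)]

section FiniteMeasure

variable {X : Type*} [MeasurableSpace X] {μ : Measure X}

lemma integral_pos_of_ae_pos [NeZero μ] {f : X → ℝ} (hf : Integrable f μ)
    (hpos : ∀ᵐ x ∂μ, 0 < f x) : 0 < ∫ x, f x ∂μ := by
  have hsupp : Function.support f =ᵐ[μ] Set.univ :=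
    eventuallyEq_univ.2 (hpos.mono fun _ hx => hx.ne')
  rw [integral_pos_iff_support_of_nonneg_ae (hpos.mono fun _ hx => hx.le) hf, measure_congr hsupp]
  exact Measure.measure_univ_pos.2 (NeZero.ne μ)

variable [IsFiniteMeasure μ] {g : X → ℝ}

lemma integral_one_sub_exp_neg_pos [NeZero μ] (hg : AEStronglyMeasurable g μ)
    (hpos : ∀ᵐ x ∂μ, 0 < g x) : 0 < ∫ x, 1 - exp (-g x) ∂μ := by
  refine integral_pos_of_ae_pos
    (.of_bound (aestronglyMeasurable_const.sub (continuous_exp.comp_aestronglyMeasurable hg.neg)) 1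
      (hpos.mono fun _ hx => abs_one_sub_exp_neg_le_one hx.le))
    (hpos.mono fun _ hx => ?_)
  simpa using hx

theorem tendsto_integral_one_sub_exp_neg_mul (hg : AEStronglyMeasurable g μ)
    (hpos : ∀ᵐ x ∂μ, 0 < g x) :
    Tendsto (fun α : ℝ => ∫ x, 1 - exp (-α * g x) ∂μ) atTop (𝓝 (μ.real Set.univ)) := by
  have hone : ∫ _, (1 : ℝ) ∂μ = μ.real Set.univ := by simp
  rw [← hone]
  refine tendsto_integral_filter_of_dominated_convergence (fun _ => 1)
    (.of_forall fun α => aestronglyMeasurable_const.sub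
      (continuous_exp.comp_aestronglyMeasurable (hg.const_mul (-α))))
    ?_ (integrable_const 1) ?_
  · filter_upwards [eventually_ge_atTop 0] with α hα
    filter_upwards [hpos] with x hx
    rw [norm_eq_abs, neg_mul]
    exact abs_one_sub_exp_neg_le_one (mul_nonneg hα hx.le)
  · filter_upwards [hpos] with x hx
    have : Tendsto (fun α : ℝ => -α * g x) atTop atBot := by
      simpa [mul_comm] using tendsto_id.atTop_mul_const_of_neg (neg_neg_of_pos hx)
    simpa using tendsto_const_nhds.sub (tendsto_exp_atBot.comp this)

end FiniteMeasure

lemma exists_linear_bounds_of_tendsto {f : ℝ → ℝ} {L : ℝ} (hf : Tendsto f atTop (𝓝 L))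
    (hL : 0 < L) :
    ∃ c₁ c₂ : ℝ, 0 < c₁ ∧ c₁ ≤ c₂ ∧ ∀ᶠ α : ℝ in atTop, c₁ * α ≤ α * f α ∧ α * f α ≤ c₂ * α := by
  refine ⟨L / 2, 2 * L, by positivity, by linarith, ?_⟩
  filter_upwards [hf (Ioo_mem_nhds (half_lt_self hL) (by linarith : L < 2 * L)),
    eventually_ge_atTop 0] with α hfα hα
  rw [mul_comm α]
  exact ⟨mul_le_mul_of_nonneg_right hfα.1.le hα, mul_le_mul_of_nonneg_right hfα.2.le hα⟩

lemma withDensity_restrict_Ioi_eq_smul_gammaMeasure {a r c : ℝ} (hc : 0 ≤ c) {f : ℝ → ℝ}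
    (hf : ∀ x, 0 < x → f x = c * gammaPDFReal a r x) :
    (volume.restrict (Set.Ioi 0)).withDensity (fun x => ENNReal.ofReal (f x)) =
      ENNReal.ofReal c • gammaMeasure a r := by
  have hmeas : Measurable (gammaPDF a r) := (measurable_gammaPDFReal a r).ennreal_ofReal
  rw [← withDensity_indicator measurableSet_Ioi, gammaMeasure, ← withDensity_smul _ hmeas]
  refine withDensity_congr_ae ?_
  filter_upwards [volume.ae_ne 0] with x hx0
  rcases hx0.lt_or_gt with hx | hx
  · simp [Set.indicator_of_notMem (Set.notMem_Ioi.mpr hx.le), gammaPDF_of_neg hx]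
  · simp [Set.indicator_of_mem (Set.mem_Ioi.mpr hx), hf x hx, ENNReal.ofReal_mul hc, gammaPDF]

lemma ae_pos_withDensity_restrict_Ioi (f : ℝ → ℝ≥0∞) :
    ∀ᵐ x ∂(volume.restrict (Set.Ioi 0)).withDensity f, 0 < x :=
  (withDensity_absolutelyContinuous _ _).ae_le (ae_restrict_mem measurableSet_Ioi)

lemma gammaM_eq_gammaMeasure (a b : ℝ) : gammaM a b = gammaMeasure a b := by
  rw [gammaM, ← one_smul ℝ≥0∞ (gammaMeasure a b), ← ENNReal.ofReal_one]
  refine withDensity_restrict_Ioi_eq_smul_gammaMeasure zero_le_one fun x hx => ?_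
  rw [gammaPDFReal, if_pos hx.le]
  ring_nf

instance sigmaFinite_gammaM (a b : ℝ) : SigmaFinite (gammaM a b) := by
  unfold gammaM
  infer_instance

instance sigmaFinite_rho0 (σ τ : ℝ) : SigmaFinite (rho0 σ τ) := by
  unfold rho0
  infer_instance

lemma isProbabilityMeasure_gammaM {a b : ℝ} (ha : 0 < a) (hb : 0 < b) :
    IsProbabilityMeasure (gammaM a b) :=
  gammaM_eq_gammaMeasure a b ▸ isProbabilityMeasure_gammaMeasure ha hb

lemma rho0_eq_smul_gammaMeasure {σ τ : ℝ} (hσ : σ < 0) (hτ : 0 < τ) :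
    rho0 σ τ = ENNReal.ofReal (τ ^ σ / -σ) • gammaMeasure (-σ) τ := by
  have hL : 0 ≤ τ ^ σ / -σ := div_nonneg (rpow_nonneg hτ.le σ) (by linarith)
  refine withDensity_restrict_Ioi_eq_smul_gammaMeasure hL fun x hx => ?_
  have hΓ : Gamma (1 - σ) = -σ * Gamma (-σ) := by
    rw [sub_eq_neg_add, Gamma_add_one (by linarith)]
  have hτσ : τ ^ σ * τ ^ (-σ) = 1 := by
    rw [← rpow_add hτ, add_neg_cancel, rpow_zero]
  have : Gamma (-σ) ≠ 0 := (Gamma_pos_of_pos (by linarith)).ne'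
  have : σ ≠ 0 := hσ.ne
  rw [gammaPDFReal, if_pos hx.le, hΓ, show -1 - σ = -σ - 1 by ring, neg_mul]
  field_simp
  rw [hτσ]

lemma rho0_univ {σ τ : ℝ} (hσ : σ < 0) (hτ : 0 < τ) :
    rho0 σ τ Set.univ = ENNReal.ofReal (τ ^ σ / -σ) := by
  have := isProbabilityMeasure_gammaMeasure (neg_pos.2 hσ) hτ
  simp [rho0_eq_smul_gammaMeasure hσ hτ]

section rhoC

variable {σ τ : ℝ} {p : ℕ} {a b : Fin p → ℝ}

lemma measurable_smul_pi :
    Measurable (fun x : ℝ × (Fin p → ℝ) => fun k => x.1 * x.2 k) := by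
  fun_prop

lemma rhoC_univ (ha : ∀ k, 0 < a k) (hb : ∀ k, 0 < b k) :
    rhoC σ τ p a b Set.univ = rho0 σ τ Set.univ := by
  have := fun k => isProbabilityMeasure_gammaM (ha k) (hb k)
  rw [rhoC, Measure.map_apply measurable_smul_pi MeasurableSet.univ, Set.preimage_univ,
    ← Set.univ_prod_univ, Measure.prod_prod, measure_univ (μ := Measure.pi _), mul_one]

lemma ae_forall_pos_rhoC : ∀ᵐ w ∂rhoC σ τ p a b, ∀ k, 0 < w k := by
  have hw₀ : ∀ᵐ w₀ ∂rho0 σ τ, 0 < w₀ := ae_pos_withDensity_restrict_Ioi _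
  have hβ : ∀ᵐ β ∂Measure.pi (fun k => gammaM (a k) (b k)), ∀ k, 0 < β k :=
    ae_all_iff.2 fun k =>
      Measure.tendsto_eval_ae_ae.eventually (ae_pos_withDensity_restrict_Ioi _)
  rw [rhoC, ae_map_iff measurable_smul_pi.aemeasurable (by measurability)]
  filter_upwards [Measure.quasiMeasurePreserving_fst.ae hw₀,
    Measure.quasiMeasurePreserving_snd.ae hβ] with x hx₁ hx₂ k using mul_pos hx₁ (hx₂ k)

instance sFinite_rhoC : SFinite (rhoC σ τ p a b) := by
  unfold rhoC
  infer_instance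

lemma stronglyMeasurable_psi : StronglyMeasurable (psi σ τ p a b) :=
  (by fun_prop : Continuous fun q : (Fin p → ℝ) × (Fin p → ℝ) =>
    1 - exp (-∑ k, q.1 k * q.2 k)).stronglyMeasurable.integral_prod_right'

lemma psi_pos [IsFiniteMeasure (rhoC σ τ p a b)] [NeZero (rhoC σ τ p a b)] [Nonempty (Fin p)]
    {t : Fin p → ℝ} (ht : ∀ k, 0 < t k) : 0 < psi σ τ p a b t :=
  integral_one_sub_exp_neg_pos
    (by fun_prop : Continuous fun v : Fin p → ℝ => ∑ k, t k * v k).aestronglyMeasurable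
    (ae_forall_pos_rhoC.mono fun _ hv =>
      Finset.sum_pos (fun k _ => mul_pos (ht k) (hv k)) Finset.univ_nonempty)

theorem tendsto_nodesIntegral [IsFiniteMeasure (rhoC σ τ p a b)] [NeZero (rhoC σ τ p a b)]
    [Nonempty (Fin p)] {T : ℝ} (hT : 0 < T) :
    Tendsto (fun α => nodesIntegral σ τ p a b α T) atTop
      (𝓝 ((rhoC σ τ p a b).real Set.univ)) :=
  tendsto_integral_one_sub_exp_neg_mul
    (stronglyMeasurable_psi.comp_measurable (by fun_prop)).aestronglyMeasurable
    (ae_forall_pos_rhoC.mono fun _ hw => psi_pos fun k => by have := hw k; positivity)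

end rhoC

/-- For `σ < 0` and fixed `T > 0`,
`∫ (1 − e^{−α ψ(2Tw)}) ρ(dw) → τ^σ/(−σ)` as `α → ∞`, a finite strictly positive limit;
consequently `E[V_{α,T}] = α ∫ (1 − e^{−α ψ(2Tw)}) ρ(dw) = Θ(α)` as `α → ∞`. -/
theorem nodes_dense_regime (σ τ : ℝ) (hσ : σ < 0) (hτ : 0 < τ) (p : ℕ) (hp : 1 ≤ p)
    (a b : Fin p → ℝ) (ha : ∀ k, 0 < a k) (hb : ∀ k, 0 < b k) (T : ℝ) (hT : 0 < T) :
    Tendsto (fun α : ℝ => nodesIntegral σ τ p a b α T) atTop (nhds (τ ^ σ / (-σ))) ∧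
    0 < τ ^ σ / (-σ) ∧
    ∃ c₁ c₂ : ℝ, 0 < c₁ ∧ c₁ ≤ c₂ ∧ ∀ᶠ α : ℝ in atTop,
      c₁ * α ≤ α * nodesIntegral σ τ p a b α T ∧
      α * nodesIntegral σ τ p a b α T ≤ c₂ * α := by
  have hL : 0 < τ ^ σ / -σ := div_pos (rpow_pos_of_pos hτ σ) (neg_pos.2 hσ)
  have hmass : rhoC σ τ p a b Set.univ = ENNReal.ofReal (τ ^ σ / -σ) := by
    rw [rhoC_univ ha hb, rho0_univ hσ hτ]
  have : Nonempty (Fin p) := ⟨⟨0, hp⟩⟩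
  have : IsFiniteMeasure (rhoC σ τ p a b) := ⟨by simp [hmass]⟩
  have : NeZero (rhoC σ τ p a b) := ⟨fun h => by simp [h] at hmass; linarith⟩
  have hlim := tendsto_nodesIntegral (σ := σ) (τ := τ) (a := a) (b := b) hT
  rw [measureReal_def, hmass, ENNReal.toReal_ofReal hL.le] at hlim
  exact ⟨hlim, hL, exists_linear_bounds_of_tendsto hlim hL⟩
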